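/- arXiv:math/0405542 — 5 statements merged into one kernel-verified Lean document; each statement's English description precedes it below -/
import Mathlib

section
/- Given sequences $(a_k)$, $(b_k)$ in a non-Archimedean valued field with $|a_k| \le A_1^{q^k - 1}$ and $|b_k| \le B_1^{q^k - 1}$ for constants $A_1, B_1 \ge 1$, the composition coefficients $c_l = \sum_{i+j=l} a_i b_j^{q^i}$ satisfy $|c_l| \le C_1^{q^l - 1}$ where $C_1 = \max(A_1, B_1)$. Consequently, by induction, all composition powers $a^{\circ n}$ of a series with coefficients bounded by $A_1^{q^k-1}$ have coefficients bounded by $A_1^{q^k-1}$, with the constant independent of $n$. -/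
/- STATEMENT 1: bounds of the form C^{q^k-1} are preserved by composition, and hence
by all composition powers, with a constant independent of n. -/

/-- Coefficients of the composition of two 𝔽_q-linear power series:
`(a ∘ b)_l = ∑_{i+j=l} a_i b_j^{q^i}`. -/
def compC {F : Type*} [Field F] (q : ℕ) (a b : ℕ → F) : ℕ → F :=
  fun l => ∑ n ∈ Finset.range (l + 1), a n * b (l - n) ^ q ^ n

/-- `compPow q a n` is the `n`-fold composition power `a^{∘n}` (with `a^{∘0} = t`). -/
def compPow {F : Type*} [Field F] (q : ℕ) (a : ℕ → F) : ℕ → ℕ → F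
  | 0 => fun k => if k = 0 then 1 else 0
  | n + 1 => compC q a (compPow q a n)

/-- Nonarchimedean bound on finite sums. -/
lemma na_sum_le {F : Type*} [Field F] (abv : AbsoluteValue F ℝ)
    (hna : IsNonarchimedean (fun t => abv t)) {ι : Type*} (s : Finset ι) (f : ι → F)
    (C : ℝ) (hC : 0 ≤ C) (h : ∀ i ∈ s, abv (f i) ≤ C) :
    abv (∑ i ∈ s, f i) ≤ C := by
  induction s using Finset.cons_induction with
  | empty => simpa using hC
  | cons i s hi ih =>
      rw [Finset.sum_cons]
      refine le_trans (hna _ _) (max_le (h i (Finset.mem_cons_self i s)) ?_)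
      exact ih fun j hj => h j (Finset.mem_cons_of_mem hj)

lemma compC_bound {F : Type*} [Field F] (q : ℕ) (hq : 1 ≤ q)
    (abv : AbsoluteValue F ℝ) (hna : IsNonarchimedean (fun t => abv t))
    (A B : ℝ) (hA : 1 ≤ A) (hB : 1 ≤ B)
    (a b : ℕ → F) (ha : ∀ k, abv (a k) ≤ A ^ (q ^ k - 1))
    (hb : ∀ k, abv (b k) ≤ B ^ (q ^ k - 1)) (l : ℕ) :
    abv (compC q a b l) ≤ (max A B) ^ (q ^ l - 1) := by
  set C := max A B with hC
  have hC1 : 1 ≤ C := le_trans hA (le_max_left _ _)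
  have hC0 : (0 : ℝ) ≤ C := le_trans zero_le_one hC1
  refine na_sum_le abv hna _ _ _ (le_trans zero_le_one (one_le_pow₀ hC1)) ?_
  intro n hn
  have hnl : n ≤ l := Nat.lt_succ_iff.mp (Finset.mem_range.mp hn)
  have key : abv (a n * b (l - n) ^ q ^ n)
      ≤ A ^ (q ^ n - 1) * (B ^ (q ^ (l - n) - 1)) ^ (q ^ n) := by
    rw [map_mul, map_pow]
    exact mul_le_mul (ha n) (pow_le_pow_left₀ (abv.nonneg _) (hb _) _)
      (pow_nonneg (abv.nonneg _) _) (le_trans zero_le_one (one_le_pow₀ hA))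
  refine key.trans ?_
  rw [← pow_mul]
  have hAC : A ^ (q ^ n - 1) ≤ C ^ (q ^ n - 1) :=
    pow_le_pow_left₀ (le_trans zero_le_one hA) (le_max_left _ _) _
  have hBC : B ^ ((q ^ (l - n) - 1) * q ^ n) ≤ C ^ ((q ^ (l - n) - 1) * q ^ n) :=
    pow_le_pow_left₀ (le_trans zero_le_one hB) (le_max_right _ _) _
  calc A ^ (q ^ n - 1) * B ^ ((q ^ (l - n) - 1) * q ^ n)
      ≤ C ^ (q ^ n - 1) * C ^ ((q ^ (l - n) - 1) * q ^ n) :=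
        mul_le_mul hAC hBC (pow_nonneg (le_trans zero_le_one hB) _)
          (pow_nonneg hC0 _)
    _ = C ^ ((q ^ n - 1) + (q ^ (l - n) - 1) * q ^ n) := by rw [← pow_add]
    _ = C ^ (q ^ l - 1) := by
        congr 1
        have h1 : 1 ≤ q ^ n := Nat.one_le_pow _ _ hq
        have h2 : q ^ n ≤ q ^ l := Nat.pow_le_pow_right hq hnl
        have h3 : (q ^ (l - n) - 1) * q ^ n = q ^ l - q ^ n := by
          rw [Nat.sub_mul, ← pow_add, Nat.sub_add_cancel hnl, one_mul]
        omega

theorem composition_bound_qk_minus_one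
    {F : Type*} [Field F] (p v : ℕ) [Fact p.Prime] (hv : 0 < v) [CharP F p]
    (q : ℕ) (hq : q = p ^ v)
    (abv : AbsoluteValue F ℝ) (hna : IsNonarchimedean (fun t => abv t))
    (A₁ B₁ : ℝ) (hA₁ : 1 ≤ A₁) (hB₁ : 1 ≤ B₁) :
    (∀ a b : ℕ → F, (∀ k, abv (a k) ≤ A₁ ^ (q ^ k - 1)) →
        (∀ k, abv (b k) ≤ B₁ ^ (q ^ k - 1)) →
        ∀ l, abv (compC q a b l) ≤ (max A₁ B₁) ^ (q ^ l - 1))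
    ∧ (∀ a : ℕ → F, (∀ k, abv (a k) ≤ A₁ ^ (q ^ k - 1)) →
        ∀ n, 1 ≤ n → ∀ k, abv (compPow q a n k) ≤ A₁ ^ (q ^ k - 1)) := by
  have hq1 : 1 ≤ q := by
    rw [hq]
    exact Nat.one_le_pow _ _ (Fact.out (p := p.Prime)).pos
  constructor
  · intro a b ha hb l
    exact compC_bound q hq1 abv hna A₁ B₁ hA₁ hB₁ a b ha hb l
  · intro a ha n hn
    induction n with
    | zero => omega
    | succ m ih =>
        have hb : ∀ k, abv (compPow q a m k) ≤ A₁ ^ (q ^ k - 1) := by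
          cases Nat.eq_zero_or_pos m with
          | inl h =>
              subst h
              intro k
              simp only [compPow]
              split
              · simp [le_trans zero_le_one (one_le_pow₀ hA₁)] <;>
                  exact one_le_pow₀ hA₁
              · simpa using pow_nonneg (le_trans zero_le_one hA₁) _
          | inr h => exact ih h
        intro k
        have := compC_bound q hq1 abv hna A₁ A₁ hA₁ hA₁ a (compPow q a m) ha hb k
        simpa [compPow] using this
end

section
/- Every nonzero element $c \in \mathcal{R}_K$ can be factored as $c = c' \circ t^{q^m}$ where $m$ is the order of $c$ (the least index with nonzero coefficient) and $c'$ is invertible in $\mathcal{R}_K$ with respect to composition. -/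
open scoped Classical

/- STATEMENT 4: every nonzero c ∈ 𝓡_K factors as c = c' ∘ t^{q^m}, where m is the order
of c and c' is invertible in 𝓡_K with respect to composition. -/

/-- The field K = 𝔽_q((x)) of formal Laurent series over 𝔽_q, q = p^v. -/
abbrev Kf (p v : ℕ) [Fact p.Prime] := LaurentSeries (GaloisField p v)

/-- The absolute value |t| = q^{-N} on K, where N is the order of vanishing. -/
noncomputable def labs (p v : ℕ) [Fact p.Prime] (f : Kf p v) : ℝ :=
  if f = 0 then 0 else ((p : ℝ) ^ v) ^ (-f.order)

/-- Membership in 𝓡_K: coefficients satisfy |a_k| ≤ A^{q^k} for some constant A > 0. -/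
def InRK (p v : ℕ) [Fact p.Prime] (a : ℕ → Kf p v) : Prop :=
  ∃ A > (0 : ℝ), ∀ k, labs p v (a k) ≤ A ^ (p ^ v) ^ k

/-- Coefficients of the m-fold Frobenius power `t^{q^m}`; `frobC 0` is the unit `t`. -/
def frobC (F : Type*) [Field F] (m : ℕ) : ℕ → F := fun k => if k = m then 1 else 0


/-! Shifting `c` down by its order `m` gives `c'` with `c = c' ∘ t^{q^m}` and `c'₀ ≠ 0`. Such a
series has a left and a right composition inverse, obtained by solving the coefficient equations
one coefficient at a time; composition is associative because `x ↦ x ^ q` is additive in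
characteristic `p`, so the two inverses agree. The left inverse `e` stays in `𝓡_K` by the
ultrametric inequality: if `|c'ₖ| ≤ A ^ q ^ k` and `r = |c'₀|`, then inductively
`|eₗ| ≤ B ^ q ^ l` with `B = max r⁻¹ ((A / r) ^ 2)`, since `2 q ^ l ≤ q ^ (l + 1)` leaves room to
absorb the factor `(A / r) ^ q ^ (l + 1)` created at each step. -/

open Finset

section Composition

variable {F : Type*} [Field F]

/-- Solves `(e ∘ a)_{l+1} = 0` for its last term `e_{l+1} a₀ ^ q ^ (l + 1)`. -/
noncomputable def compCLeftInv (q : ℕ) (a : ℕ → F) : ℕ → F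
  | 0 => (a 0)⁻¹
  | l + 1 => -((a 0) ^ q ^ (l + 1))⁻¹ *
      ∑ n : Fin (l + 1), compCLeftInv q a n * a (l + 1 - n) ^ q ^ (n : ℕ)

/-- Solves `(a ∘ f)_{l+1} = 0` for its first term `a₀ f_{l+1}`. -/
noncomputable def compCRightInv (q : ℕ) (a : ℕ → F) : ℕ → F
  | 0 => (a 0)⁻¹
  | l + 1 => -(a 0)⁻¹ *
      ∑ n : Fin (l + 1), a (n + 1) * compCRightInv q a (l - n) ^ q ^ ((n : ℕ) + 1)

variable {q : ℕ} {a : ℕ → F}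

theorem compCLeftInv_succ (l : ℕ) :
    compCLeftInv q a (l + 1) = -((a 0) ^ q ^ (l + 1))⁻¹ *
      ∑ n ∈ range (l + 1), compCLeftInv q a n * a (l + 1 - n) ^ q ^ n := by
  rw [compCLeftInv,
    Fin.sum_univ_eq_sum_range (fun n => compCLeftInv q a n * a (l + 1 - n) ^ q ^ n)]

theorem compCRightInv_succ (l : ℕ) :
    compCRightInv q a (l + 1) = -(a 0)⁻¹ *
      ∑ n ∈ range (l + 1), a (n + 1) * compCRightInv q a (l - n) ^ q ^ (n + 1) := by
  rw [compCRightInv,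
    Fin.sum_univ_eq_sum_range (fun n => a (n + 1) * compCRightInv q a (l - n) ^ q ^ (n + 1))]

theorem compC_compCLeftInv (ha : a 0 ≠ 0) :
    compC q (compCLeftInv q a) a = frobC F 0 := by
  funext l
  cases l with
  | zero => simp [compC, frobC, compCLeftInv, ha]
  | succ l =>
    rw [compC, sum_range_succ, Nat.sub_self, compCLeftInv_succ]
    simp only [frobC, Nat.add_one_ne_zero, if_false]
    field_simp
    ring

theorem compC_compCRightInv (ha : a 0 ≠ 0) :
    compC q a (compCRightInv q a) = frobC F 0 := by
  funext l
  cases l with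
  | zero => simp [compC, frobC, compCRightInv, ha]
  | succ l =>
    rw [compC, sum_range_succ', Nat.sub_zero, pow_zero, pow_one, compCRightInv_succ]
    simp only [frobC, Nat.add_one_ne_zero, if_false, Nat.add_sub_add_right]
    field_simp
    ring

theorem compC_frobC_zero_left : compC q (frobC F 0) a = a := by
  funext l
  simp [compC, frobC]

theorem compC_frobC (hq : q ≠ 0) (m : ℕ) :
    compC q a (frobC F m) = fun l => if m ≤ l then a (l - m) else 0 := by
  funext l
  have off_diagonal {n : ℕ} (hn : l - n ≠ m) : a n * frobC F m (l - n) ^ q ^ n = 0 := by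
    rw [frobC, if_neg hn, zero_pow (pow_ne_zero _ hq), mul_zero]
  rw [compC]
  split_ifs with hml
  · rw [sum_eq_single_of_mem (l - m) (mem_range.2 (by omega)) fun n hn hne =>
      off_diagonal (by rw [mem_range] at hn; omega)]
    simp [frobC, Nat.sub_sub_self hml]
  · exact sum_eq_zero fun n _ => off_diagonal (by omega)

theorem compC_frobC_zero_right (hq : q ≠ 0) : compC q a (frobC F 0) = a := by
  simp [compC_frobC hq]

theorem compC_assoc (p v : ℕ) [ExpChar F p] (a b c : ℕ → F) :
    compC (p ^ v) (compC (p ^ v) a b) c = compC (p ^ v) a (compC (p ^ v) b c) := by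
  funext l
  set q := p ^ v
  let term : ℕ → ℕ → F := fun i j => a i * b j ^ q ^ i * c (l - (i + j)) ^ q ^ (i + j)
  have frobenius_sum (i : ℕ) (s : Finset ℕ) (x : ℕ → F) :
      (∑ j ∈ s, x j) ^ q ^ i = ∑ j ∈ s, x j ^ q ^ i := by
    rw [← pow_mul, sum_pow_char_pow]
  have lhs : compC q (compC q a b) c l =
      ∑ n ∈ range (l + 1), ∑ i ∈ range (n + 1), term i (n - i) := by
    refine sum_congr rfl fun n _ => ?_
    rw [compC, sum_mul]
    refine sum_congr rfl fun i hi => ?_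
    rw [mem_range] at hi
    simp only [term, Nat.add_sub_cancel' (Nat.le_of_lt_succ hi)]
  have rhs : compC q a (compC q b c) l =
      ∑ i ∈ range (l + 1), ∑ j ∈ range (l + 1 - i), term i j := by
    refine sum_congr rfl fun i hi => ?_
    rw [mem_range] at hi
    rw [compC, frobenius_sum, mul_sum, Nat.sub_add_comm (Nat.le_of_lt_succ hi)]
    refine sum_congr rfl fun j _ => ?_
    simp only [term, mul_pow, ← pow_mul, ← pow_add, Nat.sub_sub]
    ring
  rw [lhs, rhs, sum_range_diag_flip]

theorem compCLeftInv_eq_compCRightInv (p v : ℕ) [ExpChar F p] (ha : a 0 ≠ 0) :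
    compCLeftInv (p ^ v) a = compCRightInv (p ^ v) a := by
  rw [← compC_frobC_zero_right (pow_ne_zero v (expChar_ne_zero F p)) (a := compCLeftInv _ a),
    ← compC_compCRightInv ha, ← compC_assoc, compC_compCLeftInv ha, compC_frobC_zero_left]

theorem compC_compCLeftInv_right (p v : ℕ) [ExpChar F p] (ha : a 0 ≠ 0) :
    compC (p ^ v) a (compCLeftInv (p ^ v) a) = frobC F 0 := by
  rw [compCLeftInv_eq_compCRightInv p v ha, compC_compCRightInv ha]

end Composition

section PowBounded

variable {F : Type*} [Field F] (abv : AbsoluteValue F ℝ) (q : ℕ)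

def PowBounded (a : ℕ → F) : Prop :=
  ∃ A > 0, ∀ k, abv (a k) ≤ A ^ q ^ k

variable {abv q}

theorem PowBounded.exists_one_le {a : ℕ → F} (h : PowBounded abv q a) :
    ∃ A ≥ 1, ∀ k, abv (a k) ≤ A ^ q ^ k := by
  obtain ⟨A, hA, hbound⟩ := h
  exact ⟨max A 1, le_max_right _ _, fun k =>
    (hbound k).trans (pow_le_pow_left₀ hA.le (le_max_left _ _) _)⟩

theorem PowBounded.shift {a : ℕ → F} (h : PowBounded abv q a) (m : ℕ) :
    PowBounded abv q fun k => a (k + m) := by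
  obtain ⟨A, hA, hbound⟩ := h
  refine ⟨A ^ q ^ m, by positivity, fun k => ?_⟩
  rw [← pow_mul, ← pow_add, add_comm m]
  exact hbound (k + m)

theorem pow_mul_pow_le_pow_of_sq_le {B C : ℝ} {N M : ℕ} (hB : 1 ≤ B)
    (hCB : C ^ 2 ≤ B) (hNM : 2 * N ≤ M) : B ^ N * C ^ M ≤ B ^ M := by
  refine le_of_pow_le_pow_left₀ two_ne_zero (by positivity) ?_
  calc (B ^ N * C ^ M) ^ 2 = B ^ (2 * N) * (C ^ 2) ^ M := by ring
    _ ≤ B ^ M * B ^ M := by gcongr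
    _ = (B ^ M) ^ 2 := by ring

theorem powBounded_compCLeftInv (hna : IsNonarchimedean abv) (hq : 2 ≤ q) {a : ℕ → F}
    (ha : a 0 ≠ 0) (h : PowBounded abv q a) : PowBounded abv q (compCLeftInv q a) := by
  obtain ⟨A, hA, hbound⟩ := h.exists_one_le
  set r := abv (a 0)
  have hr : 0 < r := abv.pos ha
  have hAr : 1 ≤ A / r := (one_le_div hr).2 (by simpa using hbound 0)
  set B := max r⁻¹ ((A / r) ^ 2)
  have hB : 1 ≤ B := le_max_of_le_right (one_le_pow₀ hAr)
  refine ⟨B, by positivity, fun l => ?_⟩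
  induction l using Nat.strong_induction_on with
  | _ l ih =>
  cases l with
  | zero =>
    rw [compCLeftInv, pow_zero, pow_one, map_inv₀]
    exact le_max_left _ _
  | succ l =>
    have term_le (n : ℕ) (hn : n ∈ range (l + 1)) :
        abv (compCLeftInv q a n * a (l + 1 - n) ^ q ^ n) ≤ B ^ q ^ l * A ^ q ^ (l + 1) := by
      rw [mem_range] at hn
      rw [map_mul, map_pow]
      gcongr
      · exact (ih n (by omega)).trans
          (pow_le_pow_right₀ hB (Nat.pow_le_pow_right (by omega) (by omega)))
      · calc abv (a (l + 1 - n)) ^ q ^ n ≤ (A ^ q ^ (l + 1 - n)) ^ q ^ n := by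
              gcongr; exact hbound _
          _ = A ^ q ^ (l + 1) := by rw [← pow_mul, ← pow_add, Nat.sub_add_cancel hn.le]
    obtain ⟨n, hn, hsum⟩ := hna.finset_image_add_of_nonempty
      (fun n => compCLeftInv q a n * a (l + 1 - n) ^ q ^ n) nonempty_range_add_one
    calc abv (compCLeftInv q a (l + 1))
        = (r ^ q ^ (l + 1))⁻¹ *
            abv (∑ n ∈ range (l + 1), compCLeftInv q a n * a (l + 1 - n) ^ q ^ n) := by
          rw [compCLeftInv_succ, map_mul, abv.map_neg, map_inv₀, map_pow]
      _ ≤ (r ^ q ^ (l + 1))⁻¹ * (B ^ q ^ l * A ^ q ^ (l + 1)) := by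
          gcongr; exact hsum.trans (term_le n hn)
      _ = B ^ q ^ l * (A / r) ^ q ^ (l + 1) := by rw [div_pow]; field_simp
      _ ≤ B ^ q ^ (l + 1) := pow_mul_pow_le_pow_of_sq_le hB (le_max_right _ _)
          (by rw [pow_succ']; exact Nat.mul_le_mul_right _ hq)

end PowBounded

section LaurentSeries

variable (p v : ℕ) [Fact p.Prime]

instance : ExpChar (Kf p v) p :=
  have : CharP (Kf p v) p :=
    charP_of_injective_algebraMap (algebraMap (GaloisField p v) (Kf p v)).injective p
  ExpChar.prime Fact.out

theorem one_le_cast_pow : (1 : ℝ) ≤ (p : ℝ) ^ v :=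
  one_le_pow₀ (Nat.one_le_cast.2 (Fact.out : p.Prime).one_lt.le)

theorem labs_nonneg (f : Kf p v) : 0 ≤ labs p v f := by
  unfold labs
  split_ifs <;> positivity

theorem labs_eq_zero_iff {f : Kf p v} : labs p v f = 0 ↔ f = 0 := by
  unfold labs
  split_ifs with hf
  · simp [hf]
  · simp [hf, zpow_ne_zero _ (zero_lt_one.trans_le (one_le_cast_pow p v)).ne']

theorem labs_mul (f g : Kf p v) : labs p v (f * g) = labs p v f * labs p v g := by
  by_cases hf : f = 0
  · simp [labs, hf]
  by_cases hg : g = 0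
  · simp [labs, hg]
  simp only [labs, hf, hg, mul_ne_zero hf hg, if_false, HahnSeries.order_mul hf hg, neg_add,
    zpow_add₀ (zero_lt_one.trans_le (one_le_cast_pow p v)).ne']

theorem isNonarchimedean_labs : IsNonarchimedean (labs p v) := by
  intro f g
  by_cases hfg : f + g = 0
  · rw [hfg, (labs_eq_zero_iff p v).2 rfl]
    exact le_max_of_le_left (labs_nonneg p v f)
  by_cases hf : f = 0
  · simp [hf]
  by_cases hg : g = 0
  · simp [hg]
  have hord := HahnSeries.min_order_le_order_add hfg
  simp only [labs, hf, hg, hfg, if_false]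
  rcases le_total f.order g.order with h | h
  · exact le_max_of_le_left (zpow_le_zpow_right₀ (one_le_cast_pow p v) (by omega))
  · exact le_max_of_le_right (zpow_le_zpow_right₀ (one_le_cast_pow p v) (by omega))

noncomputable def labsAbv : AbsoluteValue (Kf p v) ℝ where
  toFun := labs p v
  map_mul' := labs_mul p v
  nonneg' := labs_nonneg p v
  eq_zero' _ := labs_eq_zero_iff p v
  add_le' _ _ := (isNonarchimedean_labs p v).add_le (labs_nonneg p v)

theorem inRK_iff_powBounded (a : ℕ → Kf p v) :
    InRK p v a ↔ PowBounded (labsAbv p v) (p ^ v) a :=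
  Iff.rfl

end LaurentSeries

theorem RK_factorization (p v : ℕ) [Fact p.Prime] (hv : 0 < v)
    (c : ℕ → Kf p v) (hc : InRK p v c) (m : ℕ)
    (hm : c m ≠ 0) (hm' : ∀ k < m, c k = 0) :
    ∃ c' e : ℕ → Kf p v, InRK p v c' ∧ InRK p v e ∧
      (∀ l, compC (p ^ v) c' e l = frobC (Kf p v) 0 l) ∧
      (∀ l, compC (p ^ v) e c' l = frobC (Kf p v) 0 l) ∧
      ∀ l, c l = compC (p ^ v) c' (frobC (Kf p v) m) l := by
  have hp : p.Prime := Fact.out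
  have hq : 2 ≤ p ^ v := hp.two_le.trans (Nat.le_self_pow hv.ne' p)
  set c' : ℕ → Kf p v := fun k => c (k + m)
  have hc'₀ : c' 0 ≠ 0 := by simpa [c'] using hm
  have hc' : PowBounded (labsAbv p v) (p ^ v) c' := ((inRK_iff_powBounded p v c).1 hc).shift m
  refine ⟨c', compCLeftInv (p ^ v) c', hc',
    powBounded_compCLeftInv (isNonarchimedean_labs p v) hq hc'₀ hc',
    congrFun (compC_compCLeftInv_right p v hc'₀), congrFun (compC_compCLeftInv hc'₀),
    fun l => ?_⟩
  rw [compC_frobC (pow_ne_zero v hp.ne_zero) m]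
  dsimp only
  split_ifs with hml
  · simp [c', Nat.sub_add_cancel hml]
  · exact hm' l (by omega)
end

section
/- Let $(c_n)_{n\ge 1}$ be a sequence in a non-Archimedean valued field $\overline{K}_c$ satisfying the recurrence $c_{i+1} = \mu_i \sum_{j+l=i,\, l\ne 0} \sum_{k\ge 1} B_{jkl} \big(\sum_{n_1+\cdots+n_k=l,\,n_r\ge 1} c_{n_1} c_{n_2}^{q^{n_1}} \cdots c_{n_k}^{q^{n_1+\cdots+n_{k-1}}}\big)^{q^{j+\lambda}} + a_i$ for $i \ge 1$, where $|\mu_i| \le M$, $|a_i| \le M$, $|B_{jkl}| \le B^{k q^j}$ with $B \ge 1$, and either $\lambda = 1$, or $\lambda = 0$ and additionally $|B_{01l}| \le 1$ for all $l$. Then there exists a constant $C \ge 1$ such that $|c_n| \le C^{q^n}$ for all $n \ge 1$. -/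
lemma nonarch_sum {F : Type*} [Field F] (abv : AbsoluteValue F ℝ)
    (hna : IsNonarchimedean (fun t => abv t)) {ι : Type*} (s : Finset ι) (f : ι → F)
    {t : ℝ} (ht : 0 ≤ t) (h : ∀ i ∈ s, abv (f i) ≤ t) :
    abv (∑ i ∈ s, f i) ≤ t := by
  classical
  induction s using Finset.cons_induction with
  | empty => simpa using ht
  | cons a s ha ih =>
      rw [Finset.sum_cons]
      exact le_trans (hna _ _) (max_le (h a (Finset.mem_cons_self a s))
        (ih fun i hi => h i (Finset.mem_cons_of_mem hi)))

lemma compPow_bound {F : Type*} [Field F] (abv : AbsoluteValue F ℝ)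
    (hna : IsNonarchimedean (fun t => abv t)) (q : ℕ) (hq2 : 2 ≤ q)
    (c : ℕ → F) (C : ℝ) (hC1 : 1 ≤ C) (i : ℕ)
    (IH : ∀ m, 1 ≤ m → m ≤ i → abv (c m) ≤ C ^ (2*(q:ℝ)^m - 3)) :
    ∀ k l, l ≤ i →
      abv (compPow q (fun n => if n = 0 then 0 else c n) (k+1) l) ≤
        C ^ (2*(q:ℝ)^l - 3 - k) := by
  have hC0 : (0:ℝ) < C := lt_of_lt_of_le one_pos hC1
  intro k
  induction k with
  | zero =>
      intro l hl
      have hval : compPow q (fun n => if n = 0 then 0 else c n) 1 l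
          = (if l = 0 then 0 else c l) := by
        show compC q _ _ l = _
        rw [compC]
        rw [Finset.sum_eq_single l]
        · simp [compPow]
        · intro n hn hne
          have hn' : n < l := lt_of_le_of_ne (Nat.lt_succ_iff.mp (Finset.mem_range.mp hn)) hne
          have : l - n ≠ 0 := by omega
          have hqn : q ^ n ≠ 0 := by positivity
          simp [compPow, this, zero_pow hqn]
        · intro h; exact absurd (Finset.self_mem_range_succ l) h
      rw [hval]
      rcases Nat.eq_zero_or_pos l with rfl | hl1
      · simpa using (Real.rpow_pos_of_pos hC0 _).le
      · have := IH l hl1 hl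
        rw [if_neg (by omega : l ≠ 0)]
        simpa using this
  | succ k ihk =>
      intro l hl
      show abv (compC q _ (compPow q _ (k+1)) l) ≤ _
      rw [compC]
      apply nonarch_sum abv hna _ _ (Real.rpow_pos_of_pos hC0 _).le
      intro n hn
      have hnl : n ≤ l := Nat.lt_succ_iff.mp (Finset.mem_range.mp hn)
      rcases Nat.eq_zero_or_pos n with rfl | hn1
      · simpa using (Real.rpow_pos_of_pos hC0 _).le
      · have hcn := IH n hn1 (le_trans hnl hl)
        have hg := ihk (l - n) (le_trans (Nat.sub_le l n) hl)
        have hne : n ≠ 0 := by omega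
        rw [if_neg hne]
        rw [map_mul, map_pow]
        calc abv (c n) * abv (compPow q _ (k+1) (l-n)) ^ q ^ n
            ≤ C ^ (2*(q:ℝ)^n - 3) * (C ^ (2*(q:ℝ)^(l-n) - 3 - k)) ^ q ^ n := by
              apply mul_le_mul hcn (pow_le_pow_left₀ (abv.nonneg _) hg _)
                (pow_nonneg (abv.nonneg _) _) (Real.rpow_pos_of_pos hC0 _).le
          _ = C ^ (2*(q:ℝ)^n - 3 + (2*(q:ℝ)^(l-n) - 3 - k) * q ^ n) := by
              rw [← Real.rpow_natCast (C ^ (2*(q:ℝ)^(l-n) - 3 - k)) (q ^ n),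
                ← Real.rpow_mul hC0.le, ← Real.rpow_add hC0]
              norm_num
          _ ≤ C ^ (2*(q:ℝ)^l - 3 - (k+1:ℕ)) := by
              apply Real.rpow_le_rpow_of_exponent_le hC1
              have hpow : (q:ℝ)^(l-n) * (q:ℝ)^n = (q:ℝ)^l := by
                rw [← pow_add]; congr 1; omega
              have hq1 : (1:ℝ) ≤ (q:ℝ)^n := one_le_pow₀ (by exact_mod_cast (by omega : 1 ≤ q))
              have hk0 : (0:ℝ) ≤ (k:ℝ) := Nat.cast_nonneg k
              push_cast
              nlinarith [mul_nonneg hk0 (sub_nonneg.mpr hq1)]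

theorem recurrence_coefficient_bound
    {F : Type*} [Field F] (p v q : ℕ) [Fact p.Prime] (hv : 0 < v) [CharP F p]
    (hq : q = p ^ v)
    (abv : AbsoluteValue F ℝ) (hna : IsNonarchimedean (fun t => abv t))
    (c μ a : ℕ → F) (B : ℕ → ℕ → ℕ → F) (M Bc : ℝ) (hM : 0 < M) (hBc : 1 ≤ Bc)
    (hμ : ∀ i, abv (μ i) ≤ M) (ha : ∀ i, abv (a i) ≤ M)
    (hB : ∀ j k l, abv (B j k l) ≤ Bc ^ (k * q ^ j))
    (lam : ℕ) (hlam : lam = 1 ∨ (lam = 0 ∧ ∀ l, abv (B 0 1 l) ≤ 1))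
    (hrec : ∀ i, 1 ≤ i → c (i + 1) =
      μ i * (∑ l ∈ Finset.Icc 1 i, ∑ k ∈ Finset.Icc 1 l,
        B (i - l) k l *
          (compPow q (fun n => if n = 0 then 0 else c n) k l) ^ q ^ (i - l + lam)) + a i) :
    ∃ C ≥ (1 : ℝ), ∀ n, 1 ≤ n → abv (c n) ≤ C ^ q ^ n := by
  have hq2 : 2 ≤ q := by
    have hp2 : 2 ≤ p := (Fact.out : p.Prime).two_le
    calc 2 ≤ p := hp2
      _ ≤ p ^ v := Nat.le_self_pow (by omega) p
      _ = q := hq.symm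
  have hqR : (2:ℝ) ≤ (q:ℝ) := by exact_mod_cast hq2
  set C : ℝ := max 1 (max M (max Bc (abv (c 1)))) with hCdef
  have hC1 : 1 ≤ C := le_max_left _ _
  have hC0 : (0:ℝ) < C := lt_of_lt_of_le one_pos hC1
  have hMC : M ≤ C := le_trans (le_max_left _ _) (le_max_right _ _)
  have hBcC : Bc ≤ C := le_trans (le_trans (le_max_left _ _) (le_max_right _ _)) (le_max_right _ _)
  have hc1C : abv (c 1) ≤ C :=
    le_trans (le_trans (le_max_right _ _) (le_max_right _ _)) (le_max_right _ _)
  -- main claim by strong induction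
  have key : ∀ N, ∀ m, 1 ≤ m → m ≤ N → abv (c m) ≤ C ^ (2*(q:ℝ)^m - 3) := by
    intro N
    induction N with
    | zero => intro m h1 h2; omega
    | succ N IH =>
        intro m h1 h2
        rcases Nat.lt_succ_iff_lt_or_eq.mp (Nat.lt_succ_of_le h2) with hlt | rfl
        · exact IH m h1 (by omega)
        · rcases Nat.eq_zero_or_pos N with rfl | hN1
          · -- base case m = 1
            calc abv (c 1) ≤ C := hc1C
              _ = C ^ (1:ℝ) := (Real.rpow_one C).symm
              _ ≤ C ^ (2*(q:ℝ)^1 - 3) := by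
                  apply Real.rpow_le_rpow_of_exponent_le hC1; nlinarith
          · -- inductive step: use the recurrence for i = N ≥ 1
            rw [hrec N hN1]
            have hqN2 : (2:ℝ) ≤ (q:ℝ)^N :=
              le_trans hqR (le_self_pow₀ (by linarith) (by omega))
            have hqN12 : (2:ℝ) ≤ (q:ℝ)^(N+1) :=
              le_trans hqR (le_self_pow₀ (by linarith) (by omega))
            have hsum : abv (∑ l ∈ Finset.Icc 1 N, ∑ k ∈ Finset.Icc 1 l,
                B (N - l) k l * (compPow q (fun n => if n = 0 then 0 else c n) k l)
                  ^ q ^ (N - l + lam)) ≤ C ^ (2*(q:ℝ)^(N+1) - 4) := by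
              apply nonarch_sum abv hna _ _ (Real.rpow_pos_of_pos hC0 _).le
              intro l hl
              obtain ⟨hl1, hlN⟩ := Finset.mem_Icc.mp hl
              apply nonarch_sum abv hna _ _ (Real.rpow_pos_of_pos hC0 _).le
              intro k hk
              obtain ⟨hk1, hkl⟩ := Finset.mem_Icc.mp hk
              have hg := compPow_bound abv hna q hq2 c C hC1 N IH (k-1) l hlN
              rw [(by omega : k - 1 + 1 = k)] at hg
              rw [map_mul, map_pow]
              have hBterm : abv (B (N - l) k l) ≤ C ^ ((k * q ^ (N - l) : ℕ) : ℝ) := by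
                rw [Real.rpow_natCast]
                exact le_trans (hB _ _ _)
                  (pow_le_pow_left₀ (by linarith) hBcC _)
              calc abv (B (N-l) k l) * abv (compPow q _ k l) ^ q ^ (N - l + lam)
                  ≤ C ^ ((k * q ^ (N - l) : ℕ) : ℝ) *
                    (C ^ (2*(q:ℝ)^l - 3 - (k-1:ℕ))) ^ q ^ (N - l + lam) := by
                    apply mul_le_mul hBterm (pow_le_pow_left₀ (abv.nonneg _) hg _)
                      (pow_nonneg (abv.nonneg _) _) (Real.rpow_pos_of_pos hC0 _).le
                _ = C ^ (((k * q ^ (N - l) : ℕ) : ℝ) +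
                      (2*(q:ℝ)^l - 3 - (k-1:ℕ)) * (q ^ (N - l + lam) : ℕ)) := by
                    rw [← Real.rpow_natCast (C ^ (2*(q:ℝ)^l - 3 - (k-1:ℕ))) (q ^ (N-l+lam)),
                      ← Real.rpow_mul hC0.le, ← Real.rpow_add hC0]
                _ ≤ C ^ (2*(q:ℝ)^(N+1) - 4) := by
                    apply Real.rpow_le_rpow_of_exponent_le hC1
                    have hA1 : (1:ℝ) ≤ (q:ℝ)^(N-l) := one_le_pow₀ (by linarith)
                    have hql2 : (2:ℝ) ≤ (q:ℝ)^l :=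
                      le_trans hqR (le_self_pow₀ (by linarith) (by omega))
                    have hpow : (q:ℝ)^(N-l) * (q:ℝ)^l = (q:ℝ)^N := by
                      rw [← pow_add]; congr 1; omega
                    have hpowN : (q:ℝ)^(N+1) = (q:ℝ)^N * q := pow_succ (q:ℝ) N
                    have hkR : (1:ℝ) ≤ ((k:ℕ):ℝ) := by exact_mod_cast hk1
                    have hkk : ((k-1:ℕ):ℝ) = (k:ℝ) - 1 := by
                      push_cast [Nat.cast_sub hk1]; ring
                    rcases hlam with rfl | ⟨rfl, _⟩
                    · have hplam : (q:ℝ)^(N-l+1) = (q:ℝ)^(N-l) * q := pow_succ (q:ℝ) (N-l)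
                      push_cast [hkk]
                      rw [hplam]
                      nlinarith [mul_nonneg (mul_nonneg (by linarith : (0:ℝ) ≤ (k:ℝ))
                        (by linarith : (0:ℝ) ≤ (q:ℝ)^(N-l))) (by linarith : (0:ℝ) ≤ (q:ℝ) - 1),
                        mul_le_mul hA1 hqR (by linarith) (by linarith)]
                    · push_cast [hkk]
                      simp only [Nat.add_zero]
                      nlinarith [mul_le_mul hA1 hql2 (by linarith) (by linarith),
                        mul_nonneg (by linarith : (0:ℝ) ≤ (q:ℝ)^N)
                          (by linarith : (0:ℝ) ≤ (q:ℝ) - 2)]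
            -- combine with μ and a
            refine le_trans (hna _ _) (max_le ?_ ?_)
            · show abv _ ≤ _
              rw [map_mul]
              calc abv (μ N) * abv _ ≤ C * C ^ (2*(q:ℝ)^(N+1) - 4) := by
                    apply mul_le_mul (le_trans (hμ N) hMC) hsum (abv.nonneg _) hC0.le
                _ = C ^ (1 + (2*(q:ℝ)^(N+1) - 4)) := by
                    rw [Real.rpow_add hC0, Real.rpow_one]
                _ ≤ C ^ (2*(q:ℝ)^(N+1) - 3) := by
                    apply Real.rpow_le_rpow_of_exponent_le hC1; linarith
            · show abv (a N) ≤ _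
              calc abv (a N) ≤ C := le_trans (ha N) hMC
                _ = C ^ (1:ℝ) := (Real.rpow_one C).symm
                _ ≤ C ^ (2*(q:ℝ)^(N+1) - 3) := by
                    apply Real.rpow_le_rpow_of_exponent_le hC1; nlinarith
  refine ⟨C ^ 2, one_le_pow₀ hC1, fun n hn => ?_⟩
  calc abv (c n) ≤ C ^ (2*(q:ℝ)^n - 3) := key n n hn le_rfl
    _ ≤ C ^ (((2 * q ^ n : ℕ)):ℝ) := by
        apply Real.rpow_le_rpow_of_exponent_le hC1; push_cast; linarith
    _ = (C ^ 2) ^ q ^ n := by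
        rw [Real.rpow_natCast, pow_mul]
end

section
/- Let $Q_0, Q_2, \ldots, Q_N \in \mathcal{R}_K$ with $Q_0(t) = \sum_{j\ge 0} b_{j0} t^{q^j}$ satisfying $b_{00} = 0$. Then the equation $z + Q_2 \circ (z \circ z) + \cdots + Q_N \circ \underbrace{(z\circ\cdots\circ z)}_{N} = Q_0$ has a unique solution $z \in \mathcal{R}_K$ of the form $z(t) = \sum_{i\ge 1} c_i t^{q^i}$ (i.e., with $z(t)/t \to 0$ as $t \to 0$), and its coefficients satisfy $|c_i| \le C^{q^i}$ for some constant $C$. -/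
section Aux
variable {F : Type*} [Field F]

theorem compPow_succ (q : ℕ) (z : ℕ → F) (k : ℕ) :
    compPow q z (k + 1) = compC q z (compPow q z k) := rfl

theorem compPow_one_apply (q : ℕ) (hq : q ≠ 0) (z : ℕ → F) (l : ℕ) :
    compPow q z 1 l = z l := by
  show compC q z (compPow q z 0) l = z l
  unfold compC compPow
  rw [Finset.sum_eq_single_of_mem l (Finset.self_mem_range_succ l)]
  · simp
  · intro n hn hne
    have hn' : n < l + 1 := Finset.mem_range.mp hn
    have h1 : l - n ≠ 0 := by omega
    simp [h1, zero_pow (pow_ne_zero n hq)]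

theorem compPow_apply_zero (q : ℕ) {z : ℕ → F} (hz0 : z 0 = 0) {k : ℕ} (hk : 1 ≤ k) :
    compPow q z k 0 = 0 := by
  obtain ⟨j, rfl⟩ : ∃ j, k = j + 1 := ⟨k - 1, by omega⟩
  show compC q z (compPow q z j) 0 = 0
  simp [compC, hz0]

theorem compPow_eq_zero (q : ℕ) (hq : q ≠ 0) {z : ℕ → F} (hz0 : z 0 = 0) :
    ∀ k, 1 ≤ k → ∀ m, m < k → compPow q z k m = 0 := by
  intro k
  induction k with
  | zero => omega
  | succ j ih =>
    intro _ m hm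
    by_cases hj : j = 0
    · subst hj
      have : m = 0 := by omega
      subst this
      rw [compPow_one_apply q hq]; exact hz0
    · show compC q z (compPow q z j) m = 0
      unfold compC
      apply Finset.sum_eq_zero
      intro n hn
      have hn' : n < m + 1 := Finset.mem_range.mp hn
      rcases Nat.eq_zero_or_pos n with h0 | h1
      · subst h0; simp [hz0]
      · rw [ih (by omega) (m - n) (by omega), zero_pow (pow_ne_zero _ hq), mul_zero]

theorem compPow_congr (q : ℕ) (hq : q ≠ 0) {z w : ℕ → F} (hz0 : z 0 = 0) (hw0 : w 0 = 0)
    {M : ℕ} (h : ∀ i, i ≤ M → z i = w i) :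
    ∀ k, 1 ≤ k → ∀ m, m ≤ M + 1 → (2 ≤ k ∨ m ≤ M) → compPow q z k m = compPow q w k m := by
  intro k
  induction k with
  | zero => omega
  | succ j ih =>
    intro _ m hm hcase
    by_cases hj : j = 0
    · subst hj
      have hmM : m ≤ M := hcase.resolve_left (by omega)
      rw [compPow_one_apply q hq, compPow_one_apply q hq]
      exact h m hmM
    · show compC q z (compPow q z j) m = compC q w (compPow q w j) m
      unfold compC
      apply Finset.sum_congr rfl
      intro n hn
      have hn' : n < m + 1 := Finset.mem_range.mp hn
      rcases Nat.eq_zero_or_pos n with h0 | h1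
      · subst h0; simp [hz0, hw0]
      · by_cases hnM : n ≤ M
        · rw [h n hnM, ih (by omega) (m - n) (by omega) (Or.inr (by omega))]
        · have hmn : m - n = 0 := by omega
          rw [hmn, compPow_apply_zero q hz0 (by omega), compPow_apply_zero q hw0 (by omega),
            zero_pow (pow_ne_zero _ hq), mul_zero, mul_zero]

theorem abv_sum_le {abv : AbsoluteValue F ℝ} (hna : IsNonarchimedean (fun t => abv t))
    {ι : Type*} {s : Finset ι} {f : ι → F} {B : ℝ} (hB : 0 ≤ B)
    (h : ∀ i ∈ s, abv (f i) ≤ B) : abv (∑ i ∈ s, f i) ≤ B := by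
  classical
  induction s using Finset.cons_induction with
  | empty => simpa using hB
  | cons a s ha ih =>
    rw [Finset.sum_cons]
    exact le_trans (hna _ _)
      (max_le (h a (Finset.mem_cons_self a s)) (ih fun i hi => h i (Finset.mem_cons_of_mem hi)))

theorem pow_qpow (C : ℝ) (q n m : ℕ) (hn : n ≤ m) : (C ^ q ^ (m - n)) ^ q ^ n = C ^ q ^ m := by
  rw [← pow_mul, ← pow_add, Nat.sub_add_cancel hn]

theorem compC_inner_le (q : ℕ) (hq : 2 ≤ q) {abv : AbsoluteValue F ℝ}
    (hna : IsNonarchimedean (fun t => abv t)) {z w : ℕ → F} (hz0 : z 0 = 0)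
    {ε t C : ℝ} (hC : 1 ≤ C) (hε0 : 0 ≤ ε) (ht0 : 0 ≤ t) (htC : t * C ≤ 1)
    (hz : ∀ i, abv (z i) ≤ ε * C ^ q ^ i) (hw : ∀ i, abv (w i) ≤ t * C ^ q ^ i) :
    ∀ m, abv (compC q z w m) ≤ ε * (t * C) ^ q * C ^ q ^ m := by
  intro m
  have hC0 : (0:ℝ) < C := lt_of_lt_of_le one_pos hC
  have hB0 : 0 ≤ ε * (t * C) ^ q * C ^ q ^ m := by positivity
  unfold compC
  refine abv_sum_le hna hB0 ?_
  intro n hn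
  have hn' : n ≤ m := by have := Finset.mem_range.mp hn; omega
  rcases Nat.eq_zero_or_pos n with h0 | h1
  · subst h0
    rw [hz0, zero_mul, abv.map_zero]
    exact hB0
  · have hterm : abv (z n * w (m - n) ^ q ^ n) ≤ (ε * C ^ q ^ n) * (t * C ^ q ^ (m - n)) ^ q ^ n := by
      rw [abv.map_mul, abv.map_pow]
      exact mul_le_mul (hz n) (pow_le_pow_left₀ (abv.nonneg _) (hw (m - n)) _)
        (pow_nonneg (abv.nonneg _) _) (by positivity)
    refine le_trans hterm ?_
    rw [mul_pow, pow_qpow C q n m hn']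
    have heq : ε * C ^ q ^ n * (t ^ q ^ n * C ^ q ^ m) = ε * (t * C) ^ q ^ n * C ^ q ^ m := by
      rw [mul_pow]; ring
    rw [heq]
    have h1q : (t * C) ^ q ^ n ≤ (t * C) ^ q := by
      calc (t * C) ^ q ^ n ≤ (t * C) ^ q ^ 1 :=
        pow_le_pow_of_le_one (by positivity) htC (Nat.pow_le_pow_right (by omega) h1)
      _ = (t * C) ^ q := by rw [pow_one]
    exact mul_le_mul_of_nonneg_right (mul_le_mul_of_nonneg_left h1q hε0)
      (le_of_lt (pow_pos hC0 _))

theorem compPow_le_weak (q : ℕ) (hq : 2 ≤ q) {abv : AbsoluteValue F ℝ}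
    (hna : IsNonarchimedean (fun t => abv t)) {z : ℕ → F} (hz0 : z 0 = 0)
    {ε C : ℝ} (hC : 1 ≤ C) (hε0 : 0 ≤ ε) (hδ : ε * C ≤ 1)
    (hz : ∀ i, abv (z i) ≤ ε * C ^ q ^ i) :
    ∀ k, 1 ≤ k → ∀ m, abv (compPow q z k m) ≤ ε * C ^ q ^ m := by
  intro k
  induction k with
  | zero => omega
  | succ j ih =>
    intro _ m
    by_cases hj : j = 0
    · subst hj; rw [compPow_one_apply q (by omega)]; exact hz m
    · have hb := compC_inner_le q hq hna hz0 hC hε0 hε0 hδ hz (ih (by omega)) m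
      refine le_trans hb ?_
      have h1 : (ε * C) ^ q ≤ 1 := pow_le_one₀ (by positivity) hδ
      have hC0 : (0:ℝ) < C := lt_of_lt_of_le one_pos hC
      calc ε * (ε * C) ^ q * C ^ q ^ m ≤ ε * 1 * C ^ q ^ m :=
        mul_le_mul_of_nonneg_right (mul_le_mul_of_nonneg_left h1 hε0) (le_of_lt (pow_pos hC0 _))
      _ = ε * C ^ q ^ m := by ring

theorem compPow_le_strong (q : ℕ) (hq : 2 ≤ q) {abv : AbsoluteValue F ℝ}
    (hna : IsNonarchimedean (fun t => abv t)) {z : ℕ → F} (hz0 : z 0 = 0)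
    {ε C : ℝ} (hC : 1 ≤ C) (hε0 : 0 ≤ ε) (hδ : ε * C ≤ 1)
    (hz : ∀ i, abv (z i) ≤ ε * C ^ q ^ i) :
    ∀ k, 2 ≤ k → ∀ m, abv (compPow q z k m) ≤ ε * (ε * C) ^ q * C ^ q ^ m := by
  intro k hk m
  obtain ⟨j, rfl⟩ : ∃ j, k = j + 1 := ⟨k - 1, by omega⟩
  exact compC_inner_le q hq hna hz0 hC hε0 hε0 hδ hz
    (compPow_le_weak q hq hna hz0 hC hε0 hδ hz j (by omega)) m

end Aux

def sol {F : Type*} [Field F] (q N : ℕ) (b : ℕ → ℕ → F) (l : ℕ) : F :=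
  b l 0 - ∑ k ∈ Finset.Icc 2 N, compC q (fun j => b j k)
      (compPow q (fun i => if _h : i < l then sol q N b i else 0) k) l
termination_by l
decreasing_by exact _h

theorem sol_eq {F : Type*} [Field F] (q N : ℕ) (b : ℕ → ℕ → F) (l : ℕ) :
    sol q N b l = b l 0 - ∑ k ∈ Finset.Icc 2 N, compC q (fun j => b j k)
      (compPow q (fun i => if i < l then sol q N b i else 0) k) l := by
  rw [sol]
  simp only [dite_eq_ite]

theorem sol_zero {F : Type*} [Field F] (q N : ℕ) (b : ℕ → ℕ → F) (h00 : b 0 0 = 0) :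
    sol q N b 0 = 0 := by
  rw [sol_eq, h00]
  rw [Finset.sum_eq_zero, sub_zero]
  intro k hk
  have hk2 : 2 ≤ k := (Finset.mem_Icc.mp hk).1
  have hw : compPow q (fun _ : ℕ => (0:F)) k 0 = 0 :=
    compPow_apply_zero q rfl (by omega)
  simp [compC]
  exact Or.inr hw

theorem compC_compPow_congr {F : Type*} [Field F] (q : ℕ) (hq : q ≠ 0) (a : ℕ → F)
    {z w : ℕ → F} (hz0 : z 0 = 0) (hw0 : w 0 = 0) {l : ℕ}
    (hagree : ∀ i, i < l → z i = w i) {k : ℕ} (hk : 2 ≤ k) :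
    compC q a (compPow q z k) l = compC q a (compPow q w k) l := by
  unfold compC
  apply Finset.sum_congr rfl
  intro n hn
  have hn' : n ≤ l := by have := Finset.mem_range.mp hn; omega
  rcases Nat.eq_zero_or_pos l with h0 | h1
  · subst h0
    have hn0 : n = 0 := by omega
    subst hn0
    rw [compPow_apply_zero q hz0 (by omega), compPow_apply_zero q hw0 (by omega)]
  · rw [compPow_congr q hq hz0 hw0 (M := l - 1) (fun i hi => hagree i (by omega)) k (by omega)
      (l - n) (by omega) (Or.inl hk)]

theorem trunc_zero {F : Type*} [Field F] (q N : ℕ) (b : ℕ → ℕ → F) (h00 : b 0 0 = 0) (l : ℕ) :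
    (fun i => if i < l then sol q N b i else 0) 0 = 0 := by
  by_cases h : 0 < l <;> simp [h, sol_zero q N b h00]

theorem sol_spec {F : Type*} [Field F] (q N : ℕ) (hq : q ≠ 0) (b : ℕ → ℕ → F)
    (h00 : b 0 0 = 0) (l : ℕ) :
    sol q N b l + ∑ k ∈ Finset.Icc 2 N, compC q (fun j => b j k) (compPow q (sol q N b) k) l
      = b l 0 := by
  have hS : ∑ k ∈ Finset.Icc 2 N, compC q (fun j => b j k)
        (compPow q (fun i => if i < l then sol q N b i else 0) k) l
      = ∑ k ∈ Finset.Icc 2 N, compC q (fun j => b j k) (compPow q (sol q N b) k) l := by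
    refine Finset.sum_congr rfl fun k hk => ?_
    exact compC_compPow_congr q hq _ (trunc_zero q N b h00 l) (sol_zero q N b h00)
      (fun i hi => by simp [hi]) (Finset.mem_Icc.mp hk).1
  rw [sol_eq, hS]
  ring

theorem sol_unique {F : Type*} [Field F] (q N : ℕ) (hq : q ≠ 0) (b : ℕ → ℕ → F)
    (h00 : b 0 0 = 0) (y : ℕ → F) (hy0 : y 0 = 0)
    (hyeq : ∀ l, y l + ∑ k ∈ Finset.Icc 2 N,
      compC q (fun j => b j k) (compPow q y k) l = b l 0) :
    y = sol q N b := by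
  funext l
  induction l using Nat.strong_induction_on with
  | _ l ih =>
    have hy : y l = b l 0 - ∑ k ∈ Finset.Icc 2 N,
        compC q (fun j => b j k) (compPow q y k) l := eq_sub_of_add_eq (hyeq l)
    rw [hy, sol_eq]
    congr 1
    refine Finset.sum_congr rfl fun k hk => ?_
    refine compC_compPow_congr q hq _ hy0 (trunc_zero q N b h00 l) ?_ (Finset.mem_Icc.mp hk).1
    intro i hi
    simp only [if_pos hi]
    exact ih i hi

theorem compC_outer_le {F : Type*} [Field F] (q : ℕ) (hq : 2 ≤ q) {abv : AbsoluteValue F ℝ}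
    (hna : IsNonarchimedean (fun t => abv t)) {a W : ℕ → F} {Bo s C ε' : ℝ}
    (hC : 1 ≤ C) (hBo : 0 ≤ Bo) (hs0 : 0 ≤ s) (hε'0 : 0 ≤ ε') (hε'1 : ε' ≤ 1)
    (hx : Bo * s ≤ ε')
    (ha : ∀ j, abv (a j) ≤ Bo ^ q ^ j) (hW : ∀ m, abv (W m) ≤ s * C ^ q ^ m) :
    ∀ m, abv (compC q a W m) ≤ ε' * C ^ q ^ m := by
  intro m
  have hC0 : (0:ℝ) < C := lt_of_lt_of_le one_pos hC
  have hB : (0:ℝ) ≤ ε' * C ^ q ^ m := by positivity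
  unfold compC
  refine abv_sum_le hna hB ?_
  intro n hn
  have hn' : n ≤ m := by have := Finset.mem_range.mp hn; omega
  have hterm : abv (a n * W (m - n) ^ q ^ n) ≤ Bo ^ q ^ n * (s * C ^ q ^ (m - n)) ^ q ^ n := by
    rw [abv.map_mul, abv.map_pow]
    exact mul_le_mul (ha n) (pow_le_pow_left₀ (abv.nonneg _) (hW (m - n)) _)
      (pow_nonneg (abv.nonneg _) _) (by positivity)
  refine le_trans hterm ?_
  rw [mul_pow, pow_qpow C q n m hn', ← mul_assoc, ← mul_pow]
  have h1 : (Bo * s) ^ q ^ n ≤ ε' := by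
    have hle1 : Bo * s ≤ 1 := le_trans hx hε'1
    calc (Bo * s) ^ q ^ n ≤ Bo * s :=
      pow_le_of_le_one (by positivity) hle1 (pow_ne_zero _ (by omega))
    _ ≤ ε' := hx
  exact mul_le_mul_of_nonneg_right h1 (le_of_lt (pow_pos hC0 _))

theorem b0_pow_le {B0 ε C : ℝ} (q l : ℕ) (hq : 2 ≤ q) (hl : 1 ≤ l) (hB0 : 0 ≤ B0)
    (hε0 : 0 ≤ ε) (hε1 : ε ≤ 1) (hC0 : 0 ≤ C) (h : B0 ^ q ≤ ε * C ^ q) :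
    B0 ^ q ^ l ≤ ε * C ^ q ^ l := by
  have hexp : q ^ l = q * q ^ (l - 1) := by
    conv_lhs => rw [show l = 1 + (l - 1) by omega]
    rw [pow_add, pow_one]
  rw [hexp, pow_mul, pow_mul]
  calc (B0 ^ q) ^ q ^ (l - 1) ≤ (ε * C ^ q) ^ q ^ (l - 1) :=
    pow_le_pow_left₀ (by positivity) h _
  _ = ε ^ q ^ (l - 1) * ((C ^ q) ^ q ^ (l - 1)) := mul_pow _ _ _
  _ ≤ ε * ((C ^ q) ^ q ^ (l - 1)) := by
      refine mul_le_mul_of_nonneg_right ?_ (by positivity)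
      exact pow_le_of_le_one hε0 hε1 (pow_ne_zero _ (by omega))

theorem implicit_function_theorem
    {F : Type*} [Field F] (p v q : ℕ) [Fact p.Prime] (hv : 0 < v) [CharP F p]
    (hq : q = p ^ v)
    (abv : AbsoluteValue F ℝ) (hna : IsNonarchimedean (fun t => abv t))
    (N : ℕ) (hN : 2 ≤ N)
    (b : ℕ → ℕ → F)   -- b j k is the j-th coefficient of Q_k
    (hQ : ∀ k, k = 0 ∨ (2 ≤ k ∧ k ≤ N) →
      ∃ Bk > (0 : ℝ), ∀ j, abv (b j k) ≤ Bk ^ q ^ j)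
    (h00 : b 0 0 = 0) :
    ∃! z : ℕ → F, z 0 = 0 ∧ (∃ C > (0 : ℝ), ∀ i, abv (z i) ≤ C ^ q ^ i) ∧
      ∀ l, z l + ∑ k ∈ Finset.Icc 2 N, compC q (fun j => b j k) (compPow q z k) l
        = b l 0 := by
  have hq2 : 2 ≤ q := by
    have hp2 : 2 ≤ p := (Fact.out : p.Prime).two_le
    calc 2 ≤ p := hp2
    _ ≤ p ^ v := Nat.le_self_pow (by omega) p
    _ = q := hq.symm
  have hq0 : q ≠ 0 := by omega
  -- constants
  obtain ⟨B0', hB0'pos, hB0'⟩ := hQ 0 (Or.inl rfl)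
  set B0 : ℝ := max B0' 1 with hB0def
  have hB01 : 1 ≤ B0 := le_max_right _ _
  have hb0 : ∀ j, abv (b j 0) ≤ B0 ^ q ^ j := fun j =>
    le_trans (hB0' j) (pow_le_pow_left₀ hB0'pos.le (le_max_left _ _) _)
  have hex : ∀ k : ℕ, ∃ Bk : ℝ, 1 ≤ Bk ∧ (2 ≤ k ∧ k ≤ N → ∀ j, abv (b j k) ≤ Bk ^ q ^ j) := by
    intro k
    by_cases hk : 2 ≤ k ∧ k ≤ N
    · obtain ⟨Bk, hpos, hb⟩ := hQ k (Or.inr hk)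
      exact ⟨max Bk 1, le_max_right _ _,
        fun _ j => le_trans (hb j) (pow_le_pow_left₀ hpos.le (le_max_left _ _) _)⟩
    · exact ⟨1, le_rfl, fun h => absurd h hk⟩
  choose Bf hBf1 hBf using hex
  have hIccne : (Finset.Icc 2 N).Nonempty := Finset.nonempty_Icc.mpr hN
  set B : ℝ := (Finset.Icc 2 N).sup' hIccne Bf with hBdef
  have hB1 : 1 ≤ B := le_trans (hBf1 2) (Finset.le_sup' Bf (Finset.mem_Icc.mpr ⟨le_refl 2, hN⟩))
  have hBpos : (0:ℝ) < B := lt_of_lt_of_le one_pos hB1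
  have hbk : ∀ k ∈ Finset.Icc 2 N, ∀ j, abv (b j k) ≤ B ^ q ^ j := by
    intro k hk j
    obtain ⟨h2, hN'⟩ := Finset.mem_Icc.mp hk
    exact le_trans (hBf k ⟨h2, hN'⟩ j)
      (pow_le_pow_left₀ (le_trans zero_le_one (hBf1 k)) (Finset.le_sup' Bf hk) _)
  set C : ℝ := B * B0 ^ q with hCdef
  have hB0q1 : 1 ≤ B0 ^ q := one_le_pow₀ hB01
  have hC1 : 1 ≤ C := by nlinarith
  have hCpos : (0:ℝ) < C := lt_of_lt_of_le one_pos hC1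
  have hCne : C ≠ 0 := ne_of_gt hCpos
  have hBC : (0:ℝ) < B * C := mul_pos hBpos hCpos
  set ε : ℝ := (B * C)⁻¹ with hεdef
  have hε0 : (0:ℝ) < ε := inv_pos.mpr hBC
  have hε1 : ε ≤ 1 := by
    rw [hεdef]
    have h1 : (1:ℝ) ≤ B * C := by nlinarith
    exact inv_le_one_of_one_le₀ h1
  have hεC : ε * C = B⁻¹ := by
    rw [hεdef, mul_inv, mul_assoc, inv_mul_cancel₀ hCne, mul_one]
  have hδ : ε * C ≤ 1 := by
    rw [hεC]; exact inv_le_one_of_one_le₀ hB1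
  have hBδ : B * (ε * C) ^ q ≤ 1 := by
    rw [hεC, inv_pow]
    have hle : B ≤ B ^ q := le_self_pow₀ hB1 hq0
    calc B * (B ^ q)⁻¹ ≤ B ^ q * (B ^ q)⁻¹ :=
      mul_le_mul_of_nonneg_right hle (inv_nonneg.mpr (le_of_lt (pow_pos hBpos q)))
    _ = 1 := mul_inv_cancel₀ (ne_of_gt (pow_pos hBpos q))
  have hB0C : B0 ^ q ≤ ε * C ^ q := by
    have key : B0 ^ q * (B * C) ≤ C ^ q := by
      have h2 : C ^ 2 ≤ C ^ q := pow_le_pow_right₀ hC1 hq2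
      calc B0 ^ q * (B * C) = C * C := by rw [hCdef]; ring
      _ = C ^ 2 := by ring
      _ ≤ C ^ q := h2
    have h3 : B0 ^ q ≤ C ^ q / (B * C) := (le_div_iff₀ hBC).mpr key
    rwa [div_eq_inv_mul, ← hεdef] at h3
  -- the x-condition for outer estimate
  have hxcond : B * (ε * (ε * C) ^ q) ≤ ε := by
    calc B * (ε * (ε * C) ^ q) = ε * (B * (ε * C) ^ q) := by ring
    _ ≤ ε * 1 := mul_le_mul_of_nonneg_left hBδ hε0.le
    _ = ε := mul_one ε
  -- main bound by strong induction
  have hbound : ∀ l, abv (sol q N b l) ≤ ε * C ^ q ^ l := by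
    intro l
    induction l using Nat.strong_induction_on with
    | _ l ih =>
      rcases Nat.eq_zero_or_pos l with rfl | hl
      · rw [sol_zero q N b h00, abv.map_zero]
        exact le_of_lt (mul_pos hε0 (pow_pos hCpos _))
      · set w : ℕ → F := fun i => if i < l then sol q N b i else 0 with hwdef
        have hw0 : w 0 = 0 := trunc_zero q N b h00 l
        have hw : ∀ i, abv (w i) ≤ ε * C ^ q ^ i := by
          intro i
          by_cases h : i < l
          · simpa [hwdef, h] using ih i h
          · simp only [hwdef, if_neg h, abv.map_zero]
            exact le_of_lt (mul_pos hε0 (pow_pos hCpos _))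
        have hsol : sol q N b l = b l 0 - ∑ k ∈ Finset.Icc 2 N,
            compC q (fun j => b j k) (compPow q w k) l := sol_eq q N b l
        rw [hsol, sub_eq_add_neg]
        refine le_trans (hna _ _) (max_le ?_ ?_)
        · exact le_trans (hb0 l) (b0_pow_le q l hq2 hl (by positivity) hε0.le hε1 hCpos.le hB0C)
        · show abv (-_) ≤ _
          rw [abv.map_neg]
          refine abv_sum_le hna (le_of_lt (mul_pos hε0 (pow_pos hCpos _))) ?_
          intro k hk
          have hk2 : 2 ≤ k := (Finset.mem_Icc.mp hk).1
          have hW : ∀ m, abv (compPow q w k m) ≤ (ε * (ε * C) ^ q) * C ^ q ^ m := by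
            intro m
            have := compPow_le_strong q hq2 hna hw0 hC1 hε0.le hδ hw k hk2 m
            linarith [this]
          exact compC_outer_le q hq2 hna hC1 hBpos.le (by positivity) hε0.le hε1 hxcond
            (hbk k hk) hW l
  -- assemble
  refine ⟨sol q N b, ⟨sol_zero q N b h00, ⟨C, hCpos, fun i => ?_⟩,
    fun l => sol_spec q N hq0 b h00 l⟩, ?_⟩
  · exact le_trans (hbound i) (mul_le_of_le_one_left (le_of_lt (pow_pos hCpos _)) hε1)
  · rintro y ⟨hy0, -, hyeq⟩
    exact sol_unique q N hq0 b h00 y hy0 hyeq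
end

section
/- Consider the strongly nonlinear Carlitz differential equation $dz = \sum_{j\ge 0}\sum_{k\ge 1} a_{jk}\,\tau^j(z^{\circ k}) + \sum_{j\ge 0} a_{j0} t^{q^j}$ with $a_{jk} \in \overline{K}_c$, $|a_{jk}| \le A^{k q^j}$ for $k \ge 1$ and $|a_{j0}| \le A^{q^j}$, $A \ge 1$. Then there exists a unique solution of the form $z(t) = \sum_{k\ge 1} c_k t^{q^k}$, and it has a nonzero radius of convergence, i.e., $|c_k| \le C^{q^k}$ for some constant $C$. -/
/-- The coefficient form of the equation dz = ∑ a_{jk} τ^j(z^{∘k}) + ∑ a_{j0} t^{q^j},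
where ρ is the q-th root and x is the prime element ([i] = x^{q^i} - x). -/
def SolvesCarlitzODE {F : Type*} [Field F] (q : ℕ) (ρ : F →+* F) (x : F)
    (a : ℕ → ℕ → F) (c : ℕ → F) : Prop :=
  ∀ i : ℕ, ρ (c (i + 1) * (x ^ q ^ (i + 1) - x)) =
    (∑ l ∈ Finset.Icc 1 i, ∑ k ∈ Finset.Icc 1 l,
      a (i - l) k * (compPow q c k l) ^ q ^ (i - l)) + a i 0

section CarlitzAux
variable {F : Type*} [Field F]

lemma nonarchSumLe (abv : AbsoluteValue F ℝ) (hna : IsNonarchimedean (fun t => abv t))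
    {ι : Type*} (s : Finset ι) (f : ι → F) (B : ℝ) (hB : 0 ≤ B)
    (h : ∀ i ∈ s, abv (f i) ≤ B) : abv (∑ i ∈ s, f i) ≤ B := by
  classical
  induction s using Finset.cons_induction with
  | empty => simpa using hB
  | cons a s ha ih =>
    rw [Finset.sum_cons]
    exact le_trans (hna _ _) (max_le (h a (Finset.mem_cons_self _ _))
      (ih fun i hi => h i (Finset.mem_cons_of_mem hi)))

lemma compPow_congr_s15 (q : ℕ) (c c' : ℕ → F) :
    ∀ k l, (∀ m, m ≤ l → c m = c' m) → compPow q c k l = compPow q c' k l := by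
  intro k
  induction k with
  | zero => intro l _; rfl
  | succ k ih =>
    intro l h
    simp only [compPow, compC]
    refine Finset.sum_congr rfl fun n hn => ?_
    have hn' : n ≤ l := Nat.lt_succ_iff.mp (Finset.mem_range.mp hn)
    rw [h n hn', ih (l - n) (fun m hm => h m (le_trans hm (Nat.sub_le l n)))]

lemma compPow_one (q : ℕ) (hq : 0 < q) (c : ℕ → F) (l : ℕ) : compPow q c 1 l = c l := by
  simp only [compPow, compC]
  rw [Finset.sum_eq_single l]
  · simp
  · intro n hn hne
    have hn' : n < l := lt_of_le_of_ne (Nat.lt_succ_iff.mp (Finset.mem_range.mp hn)) hne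
    rw [if_neg (Nat.sub_ne_zero_of_lt hn'), zero_pow (pow_ne_zero _ hq.ne')]
    ring
  · intro h; exact absurd (Finset.self_mem_range_succ l) h

/-- the right-hand side of the coefficient equation at level `i`. -/
def rhsC (q : ℕ) (a : ℕ → ℕ → F) (c : ℕ → F) (i : ℕ) : F :=
  (∑ l ∈ Finset.Icc 1 i, ∑ k ∈ Finset.Icc 1 l,
    a (i - l) k * (compPow q c k l) ^ q ^ (i - l)) + a i 0

lemma rhsC_congr (q : ℕ) (a : ℕ → ℕ → F) {c c' : ℕ → F} (i : ℕ)
    (h : ∀ m, m ≤ i → c m = c' m) : rhsC q a c i = rhsC q a c' i := by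
  unfold rhsC
  congr 1
  refine Finset.sum_congr rfl fun l hl => Finset.sum_congr rfl fun k hk => ?_
  have hl' : l ≤ i := (Finset.mem_Icc.mp hl).2
  rw [compPow_congr_s15 q c c' k l (fun m hm => h m (hm.trans hl'))]

/-- auxiliary recursive construction of the solution coefficients. -/
noncomputable def carlitzAux (q : ℕ) (x : F) (a : ℕ → ℕ → F) : ℕ → ℕ → F
  | 0 => fun _ => 0
  | (n+1) => fun m =>
      if m = n + 1 then (rhsC q a (carlitzAux q x a n) n) ^ q * (x ^ q ^ (n+1) - x)⁻¹
      else carlitzAux q x a n m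

noncomputable def carlitzC (q : ℕ) (x : F) (a : ℕ → ℕ → F) : ℕ → F :=
  fun n => carlitzAux q x a n n

lemma carlitzAux_eq (q : ℕ) (x : F) (a : ℕ → ℕ → F) :
    ∀ n m, m ≤ n → carlitzAux q x a n m = carlitzC q x a m := by
  intro n
  induction n with
  | zero => intro m hm; rw [Nat.le_zero.mp hm]; rfl
  | succ n ih =>
    intro m hm
    by_cases h : m = n + 1
    · subst h; rfl
    · have hm' : m ≤ n := Nat.lt_succ_iff.mp (lt_of_le_of_ne hm h)
      show (if m = n + 1 then _ else carlitzAux q x a n m) = _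
      rw [if_neg h, ih m hm']

lemma carlitzC_zero (q : ℕ) (x : F) (a : ℕ → ℕ → F) : carlitzC q x a 0 = 0 := rfl

lemma carlitzC_succ (q : ℕ) (x : F) (a : ℕ → ℕ → F) (n : ℕ) :
    carlitzC q x a (n+1)
      = (rhsC q a (carlitzC q x a) n) ^ q * (x ^ q ^ (n+1) - x)⁻¹ := by
  show (if n + 1 = n + 1 then _ else carlitzAux q x a n (n+1)) = _
  rw [if_pos rfl, rhsC_congr q a n (fun m hm => carlitzAux_eq q x a n m hm)]

end CarlitzAux

theorem carlitz_cauchy_theorem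
    {F : Type*} [Field F] (p v q : ℕ) [Fact p.Prime] (hv : 0 < v) [CharP F p]
    (hq : q = p ^ v)
    (abv : AbsoluteValue F ℝ) (hna : IsNonarchimedean (fun t => abv t))
    (ρ : F →+* F) (hρ : ∀ t : F, ρ t ^ q = t)   -- ρ = τ⁻¹, the q-th root
    (x : F) (hx : abv x = (q : ℝ)⁻¹)            -- the prime element of K
    (a : ℕ → ℕ → F) (A : ℝ) (hA : 1 ≤ A)
    (hajk : ∀ j k, 1 ≤ k → abv (a j k) ≤ A ^ (k * q ^ j))
    (haj0 : ∀ j, abv (a j 0) ≤ A ^ q ^ j) :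
    ∃ c : ℕ → F, c 0 = 0 ∧ SolvesCarlitzODE q ρ x a c ∧
      (∃ C ≥ (1 : ℝ), ∀ k, abv (c k) ≤ C ^ q ^ k) ∧
      ∀ c' : ℕ → F, c' 0 = 0 → SolvesCarlitzODE q ρ x a c' → c' = c := by
  have hp2 : 2 ≤ p := (Fact.out : p.Prime).two_le
  have hq2 : 2 ≤ q := hq ▸ le_trans hp2 (Nat.le_self_pow hv.ne' p)
  have hq0 : 0 < q := lt_of_lt_of_le two_pos hq2
  have hqr : (2 : ℝ) ≤ (q : ℝ) := by exact_mod_cast hq2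
  have hqr0 : (0 : ℝ) < (q : ℝ) := by positivity
  -- q-th power map is injective
  have hqinj : ∀ s t : F, s ^ q = t ^ q → s = t := by
    intro s t hst
    have h1 : (s - t) ^ q = s ^ q - t ^ q := by
      rw [hq]; exact sub_pow_char_pow s t v
    have h2 : (s - t) ^ q = 0 := by rw [h1, hst, sub_self]
    exact sub_eq_zero.mp (pow_eq_zero_iff hq0.ne' |>.mp h2)
  have hρpow : ∀ t : F, ρ (t ^ q) = t := fun t => hqinj _ _ (hρ (t ^ q))
  have hρinj : ∀ s t : F, ρ s = ρ t → s = t := by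
    intro s t hst
    rw [← hρ s, ← hρ t, hst]
  -- the denominators
  have habsu : ∀ i : ℕ, (q : ℝ)⁻¹ ≤ abv (x ^ q ^ (i+1) - x) := by
    intro i
    have h1 : abv (x ^ q ^ (i+1)) < abv x := by
      rw [map_pow, hx]
      have : 1 < q ^ (i+1) := Nat.one_lt_pow (Nat.succ_ne_zero i) hq2
      calc ((q:ℝ)⁻¹) ^ q ^ (i+1) < ((q:ℝ)⁻¹) ^ 1 := by
            apply pow_lt_pow_right_of_lt_one₀ (by positivity)
              (by rw [inv_lt_one_iff₀]; right; linarith) this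
        _ = (q:ℝ)⁻¹ := pow_one _
    have h2 : abv x ≤ max (abv (x ^ q ^ (i+1) - x)) (abv (x ^ q ^ (i+1))) := by
      have : x = (x ^ q ^ (i+1) - x) * (-1) + x ^ q ^ (i+1) := by ring
      calc abv x = abv ((x ^ q ^ (i+1) - x) * (-1) + x ^ q ^ (i+1)) := by rw [← this]
        _ ≤ max (abv ((x ^ q ^ (i+1) - x) * (-1))) (abv (x ^ q ^ (i+1))) := hna _ _
        _ = max (abv (x ^ q ^ (i+1) - x)) (abv (x ^ q ^ (i+1))) := by
            rw [map_mul, abv.map_neg, map_one, mul_one]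
    rw [← hx]
    rcases max_cases (abv (x ^ q ^ (i+1) - x)) (abv (x ^ q ^ (i+1))) with ⟨he, _⟩ | ⟨he, _⟩
    · rw [he] at h2; exact h2
    · rw [he] at h2; linarith
  have hu0 : ∀ i : ℕ, x ^ q ^ (i+1) - x ≠ 0 := by
    intro i h
    have := habsu i
    rw [h, map_zero] at this
    have : (0:ℝ) < (q:ℝ)⁻¹ := by positivity
    linarith
  set c : ℕ → F := carlitzC q x a with hc
  have hc0 : c 0 = 0 := rfl
  have hmul : ∀ i : ℕ, c (i+1) * (x ^ q ^ (i+1) - x) = (rhsC q a c i) ^ q := by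
    intro i
    rw [hc, carlitzC_succ, mul_assoc, inv_mul_cancel₀ (hu0 i), mul_one]
  have hsolves : SolvesCarlitzODE q ρ x a c := by
    intro i
    rw [hmul i, hρpow]
    rfl
  refine ⟨c, hc0, hsolves, ?_, ?_⟩
  · -- the bound
    set C : ℝ := max A (q : ℝ) with hCdef
    have hC0 : (0:ℝ) < C := lt_of_lt_of_le hqr0 (le_max_right _ _)
    have hC1 : (1:ℝ) ≤ C := le_trans hA (le_max_left _ _)
    have hCq : (q:ℝ) ≤ C := le_max_right _ _
    have hCA : A ≤ C := le_max_left _ _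
    have rpow_npow : ∀ (e : ℝ) (n : ℕ), (C ^ e) ^ n = C ^ (e * n) := by
      intro e n
      rw [← Real.rpow_natCast (C ^ e) n, ← Real.rpow_mul hC0.le]
    have mono : ∀ {e f : ℝ}, e ≤ f → C ^ e ≤ C ^ f := fun h =>
      Real.rpow_le_rpow_of_exponent_le hC1 h
    have hApow : ∀ n : ℕ, A ^ n ≤ C ^ (n : ℝ) := by
      intro n
      rw [← Real.rpow_natCast A n]
      exact Real.rpow_le_rpow (by linarith) hCA (by positivity)
    have hmain : ∀ i : ℕ, ∀ m : ℕ, 1 ≤ m → m ≤ i →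
        abv (c m) ≤ C ^ (4 * (q:ℝ) ^ m - 5) := by
      intro i
      induction i with
      | zero => intro m h1 h0; omega
      | succ i ih =>
        intro m h1 hm
        by_cases hcase : m ≤ i
        · exact ih m h1 hcase
        · have hm1 : m = i + 1 := by omega
          subst hm1
          clear hcase h1 hm
          -- bound on composition powers
          have hcomp : ∀ k, 1 ≤ k → ∀ l, l ≤ i →
              abv (compPow q c k l) ≤ C ^ (4 * (q:ℝ) ^ l - 5 - ((k:ℝ) - 1) * q) := by
            intro k hk
            induction k, hk using Nat.le_induction with
            | base =>
              intro l hl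
              rw [compPow_one q hq0]
              rcases Nat.eq_zero_or_pos l with h0 | h0
              · rw [h0, hc0, map_zero]; positivity
              · exact (ih l h0 hl).trans (mono (by push_cast; linarith))
            | succ k hk ihk =>
              intro l hl
              show abv (compC q c (compPow q c k) l) ≤ _
              unfold compC
              refine nonarchSumLe abv hna _ _ _ (by positivity) ?_
              intro n hn
              have hn' : n ≤ l := Nat.lt_succ_iff.mp (Finset.mem_range.mp hn)
              rcases Nat.eq_zero_or_pos n with h0 | h0
              · rw [h0, hc0, zero_mul, map_zero]; positivity
              · have hk1 : (1:ℝ) ≤ (k:ℝ) := by exact_mod_cast hk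
                have hQn : (q:ℝ) ≤ (q:ℝ) ^ n := by
                  calc (q:ℝ) = (q:ℝ) ^ 1 := (pow_one _).symm
                    _ ≤ (q:ℝ) ^ n := pow_le_pow_right₀ (by linarith) h0
                have hQn1 : (1:ℝ) ≤ (q:ℝ) ^ n := one_le_pow₀ (by linarith)
                have hQ : (q:ℝ) ^ (l - n) * (q:ℝ) ^ n = (q:ℝ) ^ l := by
                  rw [← pow_add, Nat.sub_add_cancel hn']
                have hb1 : abv (c n) ≤ C ^ (4 * (q:ℝ) ^ n - 5) :=
                  ih n h0 (hn'.trans hl)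
                have hb2 : abv (compPow q c k (l - n)) ≤
                    C ^ (4 * (q:ℝ) ^ (l - n) - 5 - ((k:ℝ) - 1) * q) :=
                  ihk (l - n) ((Nat.sub_le l n).trans hl)
                calc abv (c n * compPow q c k (l - n) ^ q ^ n)
                    = abv (c n) * abv (compPow q c k (l - n)) ^ q ^ n := by
                      rw [map_mul, map_pow]
                  _ ≤ C ^ (4 * (q:ℝ) ^ n - 5) *
                      (C ^ (4 * (q:ℝ) ^ (l - n) - 5 - ((k:ℝ) - 1) * q)) ^ q ^ n := by
                      exact mul_le_mul hb1 (pow_le_pow_left₀ (abv.nonneg _) hb2 _)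
                        (by positivity) (by positivity)
                  _ = C ^ (4 * (q:ℝ) ^ n - 5 +
                        (4 * (q:ℝ) ^ (l - n) - 5 - ((k:ℝ) - 1) * q) * ((q:ℕ) ^ n : ℕ)) := by
                      rw [rpow_npow, ← Real.rpow_add hC0]
                  _ ≤ C ^ (4 * (q:ℝ) ^ l - 5 - (((k:ℕ)+1 : ℕ) - 1 : ℝ) * q) := by
                      refine mono ?_
                      push_cast
                      nlinarith [mul_nonneg (mul_nonneg (sub_nonneg.mpr hk1) hqr0.le)
                        (sub_nonneg.mpr hQn1), hQ, hQn]
          -- bound on the right-hand side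
          have hE : abv (rhsC q a c i) ≤ C ^ (4 * (q:ℝ) ^ i - 6 / q) := by
            unfold rhsC
            refine le_trans (hna _ _) (max_le ?_ ?_)
            · refine nonarchSumLe abv hna _ _ _ (by positivity) ?_
              intro l hl
              refine nonarchSumLe abv hna _ _ _ (by positivity) ?_
              intro k hk
              obtain ⟨hl1, hl2⟩ := Finset.mem_Icc.mp hl
              obtain ⟨hk1, hk2⟩ := Finset.mem_Icc.mp hk
              have hk1' : (1:ℝ) ≤ (k:ℝ) := by exact_mod_cast hk1
              have hR1 : (1:ℝ) ≤ (q:ℝ) ^ (i - l) := one_le_pow₀ (by linarith)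
              have hRl : (q:ℝ) ^ l * (q:ℝ) ^ (i - l) = (q:ℝ) ^ i := by
                rw [← pow_add, Nat.add_sub_cancel' hl2]
              have h6q : 6 / (q:ℝ) ≤ 3 := by
                rw [div_le_iff₀ hqr0]; linarith
              calc abv (a (i - l) k * compPow q c k l ^ q ^ (i - l))
                  = abv (a (i - l) k) * abv (compPow q c k l) ^ q ^ (i - l) := by
                    rw [map_mul, map_pow]
                _ ≤ C ^ ((k * q ^ (i - l) : ℕ) : ℝ) *
                    (C ^ (4 * (q:ℝ) ^ l - 5 - ((k:ℝ) - 1) * q)) ^ q ^ (i - l) := by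
                    exact mul_le_mul ((hajk (i - l) k hk1).trans (hApow _))
                      (pow_le_pow_left₀ (abv.nonneg _) (hcomp k hk1 l hl2) _)
                      (by positivity) (by positivity)
                _ = C ^ (((k * q ^ (i - l) : ℕ) : ℝ) +
                      (4 * (q:ℝ) ^ l - 5 - ((k:ℝ) - 1) * q) * ((q:ℕ) ^ (i - l) : ℕ)) := by
                    rw [rpow_npow, ← Real.rpow_add hC0]
                _ ≤ C ^ (4 * (q:ℝ) ^ i - 6 / q) := by
                    refine mono ?_
                    push_cast
                    nlinarith [mul_nonneg (mul_nonneg (sub_nonneg.mpr hk1') hqr0.le)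
                      (sub_nonneg.mpr hR1), hRl, hR1,
                      mul_le_mul_of_nonneg_right hk1'
                        (le_trans zero_le_one hR1)]
            · have hQi1 : (1:ℝ) ≤ (q:ℝ) ^ i := one_le_pow₀ (by linarith)
              have h6q : 6 / (q:ℝ) ≤ 3 := by rw [div_le_iff₀ hqr0]; linarith
              calc abv (a i 0) ≤ A ^ q ^ i := haj0 i
                _ ≤ C ^ ((q ^ i : ℕ) : ℝ) := hApow _
                _ ≤ C ^ (4 * (q:ℝ) ^ i - 6 / q) := by
                    refine mono ?_
                    push_cast
                    nlinarith
          -- conclude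
          have h5 : abv (c (i+1)) * abv (x ^ q ^ (i+1) - x) = abv (rhsC q a c i) ^ q := by
            rw [← map_pow, ← map_mul, hmul i]
          have h6 : abv (rhsC q a c i) ^ q ≤ (C ^ (4 * (q:ℝ) ^ i - 6 / q)) ^ q :=
            pow_le_pow_left₀ (abv.nonneg _) hE q
          have h7 : abv (c (i+1)) * (q:ℝ)⁻¹ ≤ (C ^ (4 * (q:ℝ) ^ i - 6 / q)) ^ q := by
            calc abv (c (i+1)) * (q:ℝ)⁻¹ ≤ abv (c (i+1)) * abv (x ^ q ^ (i+1) - x) :=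
                  mul_le_mul_of_nonneg_left (habsu i) (abv.nonneg _)
              _ = abv (rhsC q a c i) ^ q := h5
              _ ≤ _ := h6
          have h8 : abv (c (i+1)) ≤ (q:ℝ) * (C ^ (4 * (q:ℝ) ^ i - 6 / q)) ^ q := by
            calc abv (c (i+1)) = abv (c (i+1)) * (q:ℝ)⁻¹ * q := by field_simp
              _ ≤ (C ^ (4 * (q:ℝ) ^ i - 6 / q)) ^ q * q :=
                  mul_le_mul_of_nonneg_right h7 hqr0.le
              _ = (q:ℝ) * (C ^ (4 * (q:ℝ) ^ i - 6 / q)) ^ q := mul_comm _ _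
          refine h8.trans ?_
          rw [rpow_npow]
          have hEq : (4 * (q:ℝ) ^ i - 6 / q) * q = 4 * (q:ℝ) ^ (i+1) - 6 := by
            field_simp
            ring
          rw [hEq]
          calc (q:ℝ) * C ^ (4 * (q:ℝ) ^ (i+1) - 6)
              ≤ C ^ (1:ℝ) * C ^ (4 * (q:ℝ) ^ (i+1) - 6) := by
                rw [Real.rpow_one]
                exact mul_le_mul_of_nonneg_right hCq (by positivity)
            _ = C ^ (1 + (4 * (q:ℝ) ^ (i+1) - 6)) := (Real.rpow_add hC0 _ _).symm
            _ ≤ C ^ (4 * (q:ℝ) ^ (i+1) - 5) := mono (by linarith)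
    refine ⟨C ^ (4:ℕ), one_le_pow₀ hC1, ?_⟩
    intro k
    cases k with
    | zero => rw [hc0, map_zero]; positivity
    | succ m =>
      calc abv (c (m+1)) ≤ C ^ (4 * (q:ℝ) ^ (m+1) - 5) := hmain (m+1) (m+1) (by omega) le_rfl
        _ ≤ C ^ (((4 * q ^ (m+1) : ℕ) : ℝ)) := by
            refine mono ?_
            push_cast
            linarith
        _ = C ^ (4 * q ^ (m+1) : ℕ) := Real.rpow_natCast _ _
        _ = (C ^ (4:ℕ)) ^ q ^ (m+1) := by rw [pow_mul]
  · -- uniqueness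
    intro c' hc'0 hc'solves
    have key : ∀ n, ∀ m, m ≤ n → c' m = c m := by
      intro n
      induction n with
      | zero => intro m hm; rw [Nat.le_zero.mp hm, hc'0, hc0]
      | succ n ih =>
        intro m hm
        by_cases h : m = n + 1
        · subst h
          have e1 : ρ (c' (n+1) * (x ^ q ^ (n+1) - x)) = rhsC q a c' n := hc'solves n
          have e2 : ρ (c (n+1) * (x ^ q ^ (n+1) - x)) = rhsC q a c n := hsolves n
          have e3 : rhsC q a c' n = rhsC q a c n := rhsC_congr q a n (fun m hm => ih m hm)
          have e4 := hρinj _ _ (e1.trans (e3.trans e2.symm))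
          exact mul_right_cancel₀ (hu0 n) e4
        · exact ih m (Nat.lt_succ_iff.mp (lt_of_le_of_ne hm h))
    funext m
    exact key m m le_rfl
end
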